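/- arXiv:1412.6966 — 3 statements merged into one kernel-verified Lean document; each statement's English description precedes it below -/
import Mathlib

section
/- Let g : ℝ → ℝ be a convex, three times differentiable function such that |g'''(t)| ≤ S·g''(t) for all t ∈ ℝ, for some S > 0. Then for all t ≥ 0, (g''(0)/S²)·φ(−St) ≤ g(t) − g(0) − g'(0)·t ≤ (g''(0)/S²)·φ(St), where φ(x) = eˣ − x − 1. -/
/-!
Since `|g'''| ≤ S g''`, the functions `g'' e^{-Su}` and `g'' e^{Su}` are respectively
nonincreasing and nondecreasing, so `g''(0) e^{-Su} ≤ g''(u) ≤ g''(0) e^{Su}` for `u ≥ 0`.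
Integrating these bounds twice from `0` to `t` gives the claim, because
`(c/k²) φ(kt)` is the solution of `y'' = c e^{ku}` with `y(0) = y'(0) = 0`.
The lower bounds are the upper bounds for `-g` with rate `-S`.
-/

open Real

theorem le_of_hasDerivAt_le_of_le {f g f' g' : ℝ → ℝ} {a t : ℝ}
    (hf : ∀ x, HasDerivAt f (f' x) x) (hg : ∀ x, HasDerivAt g (g' x) x)
    (ha : f a ≤ g a) (hle : ∀ x, a ≤ x → f' x ≤ g' x) (ht : a ≤ t) : f t ≤ g t := by
  have hmono : MonotoneOn (fun x => g x - f x) (Set.Ici a) :=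
    monotoneOn_of_hasDerivWithinAt_nonneg (convex_Ici a)
      (fun x _ => ((hg x).sub (hf x)).continuousAt.continuousWithinAt)
      (fun x _ => ((hg x).sub (hf x)).hasDerivWithinAt)
      (fun x hx => sub_nonneg.2 (hle x (by rw [interior_Ici] at hx; exact le_of_lt hx)))
  have := hmono Set.self_mem_Ici ht ht
  simp only at this
  linarith

theorem le_mul_exp_of_deriv_le_mul {h h' : ℝ → ℝ} {c t : ℝ} (hd : ∀ x, HasDerivAt h (h' x) x)
    (hle : ∀ x, 0 ≤ x → h' x ≤ c * h x) (ht : 0 ≤ t) : h t ≤ h 0 * exp (c * t) := by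
  have hdamped : h t * exp (-c * t) ≤ h 0 := by
    refine le_of_hasDerivAt_le_of_le (g' := fun _ => 0)
      (f := fun u => h u * exp (-c * u)) (f' := fun u => (h' u - c * h u) * exp (-c * u))
      (fun x => ?_) (fun x => hasDerivAt_const x (h 0)) (by simp) (fun x hx => ?_) ht
    · have := (hd x).mul (((hasDerivAt_id x).const_mul (-c)).exp)
      exact this.congr_deriv (by simp only [id_eq, neg_mul, mul_one, mul_neg]; ring)
    · exact mul_nonpos_of_nonpos_of_nonneg (by linarith [hle x hx]) (exp_pos _).le
  calc h t = h t * exp (-c * t) * exp (c * t) := by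
        rw [mul_assoc, ← exp_add]; simp
    _ ≤ h 0 * exp (c * t) := mul_le_mul_of_nonneg_right hdamped (exp_pos _).le

theorem taylor_remainder_le_of_deriv2_le_mul_exp {f f' f'' : ℝ → ℝ} {c k t : ℝ} (hk : k ≠ 0)
    (hf : ∀ x, HasDerivAt f (f' x) x) (hf' : ∀ x, HasDerivAt f' (f'' x) x)
    (hle : ∀ x, 0 ≤ x → f'' x ≤ c * exp (k * x)) (ht : 0 ≤ t) :
    f t - f 0 - f' 0 * t ≤ c / k ^ 2 * (exp (k * t) - k * t - 1) := by
  have hexp : ∀ x, HasDerivAt (fun u => exp (k * u)) (k * exp (k * x)) x := fun x => by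
    simpa [mul_comm] using ((hasDerivAt_id x).const_mul k).exp
  have hderiv : ∀ x, 0 ≤ x → f' x ≤ f' 0 + c / k * (exp (k * x) - 1) := fun x hx =>
    le_of_hasDerivAt_le_of_le hf' (fun u => (((hexp u).sub_const 1).const_mul (c / k)).const_add
      (f' 0) |>.congr_deriv (by field_simp)) (by simp) hle hx
  have := le_of_hasDerivAt_le_of_le
    (g := fun u => f 0 + f' 0 * u + c / k ^ 2 * (exp (k * u) - k * u - 1))
    hf (fun u => ((((hasDerivAt_id u).const_mul (f' 0)).const_add (f 0)).add
      ((((hexp u).sub ((hasDerivAt_id u).const_mul k)).sub_const 1).const_mul (c / k ^ 2)))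
      |>.congr_deriv (by field_simp))
    (by simp) hderiv ht
  linarith

theorem stmt7_general (g g' g'' g''' : ℝ → ℝ) (S : ℝ) (hS : 0 < S)
    (hd1 : ∀ t, HasDerivAt g (g' t) t)
    (hd2 : ∀ t, HasDerivAt g' (g'' t) t)
    (hd3 : ∀ t, HasDerivAt g'' (g''' t) t)
    (hbound : ∀ t, |g''' t| ≤ S * g'' t) :
    ∀ t : ℝ, 0 ≤ t →
      (g'' 0 / S ^ 2) * (Real.exp (-S * t) - (-S * t) - 1)
          ≤ g t - g 0 - g' 0 * t ∧
      g t - g 0 - g' 0 * t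
          ≤ (g'' 0 / S ^ 2) * (Real.exp (S * t) - S * t - 1) := by
  intro t ht
  have hupper : ∀ u, 0 ≤ u → g'' u ≤ g'' 0 * exp (S * u) := fun u hu =>
    le_mul_exp_of_deriv_le_mul hd3 (fun x _ => (le_abs_self _).trans (hbound x)) hu
  have hlower : ∀ u, 0 ≤ u → -g'' u ≤ -g'' 0 * exp (-S * u) := fun u hu =>
    le_mul_exp_of_deriv_le_mul (h := fun x => -g'' x) (fun x => (hd3 x).neg)
      (fun x _ => by linarith [neg_abs_le (g''' x), hbound x]) hu
  constructor
  · have := taylor_remainder_le_of_deriv2_le_mul_exp (f := fun x => -g x) (neg_ne_zero.2 hS.ne')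
      (fun x => (hd1 x).neg) (fun x => (hd2 x).neg) hlower ht
    rw [neg_sq, neg_div] at this
    linarith
  · exact taylor_remainder_le_of_deriv2_le_mul_exp hS.ne' hd1 hd2 hupper ht

/-- Bach's lemma: if `g` is convex, three times differentiable with `|g'''| ≤ S g''`,
then for all `t ≥ 0`,
`(g''(0)/S²) φ(−St) ≤ g(t) − g(0) − g'(0) t ≤ (g''(0)/S²) φ(St)` with `φ(x) = eˣ − x − 1`. -/
theorem stmt7 (g g' g'' g''' : ℝ → ℝ) (S : ℝ) (hS : 0 < S)
    (hd1 : ∀ t, HasDerivAt g (g' t) t)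
    (hd2 : ∀ t, HasDerivAt g' (g'' t) t)
    (hd3 : ∀ t, HasDerivAt g'' (g''' t) t)
    (hconv : ∀ t, 0 ≤ g'' t)
    (hbound : ∀ t, |g''' t| ≤ S * g'' t) :
    ∀ t : ℝ, 0 ≤ t →
      (g'' 0 / S ^ 2) * (Real.exp (-S * t) - (-S * t) - 1)
          ≤ g t - g 0 - g' 0 * t ∧
      g t - g 0 - g' 0 * t
          ≤ (g'' 0 / S ^ 2) * (Real.exp (S * t) - S * t - 1) :=
  stmt7_general g g' g'' g''' S hS hd1 hd2 hd3 hbound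
end

section
/- The function x ↦ φ(x)/x² with φ(x) = eˣ − x − 1 (extended by the value 1/2 at x = 0) is nonnegative and monotonically increasing on ℝ. -/
/-!
Write `g x = (eˣ - x - 1) / x²`. Away from `0`, `g' x = h x / x³` with `h x = (x - 2) eˣ + x + 2`.
Since `h 0 = 0` and `h' x = (x - 1) eˣ + 1 > 0` for `x ≠ 0` (this is `e⁻ˣ > 1 - x`), `h` has the
sign of `x`, so `g` increases on each half-line. Across `0`, `g x - 1/2 = (eˣ - 1 - x - x²/2) / x²`,
and the numerator, whose derivative `eˣ - 1 - x` is positive off `0`, also has the sign of `x`.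
-/

open Real Set

theorem strictMonoOn_of_hasDerivAt_pos {D : Set ℝ} (hD : Convex ℝ D) {f f' : ℝ → ℝ}
    (hf : ∀ x ∈ D, HasDerivAt f (f' x) x) (hf' : ∀ x ∈ interior D, 0 < f' x) :
    StrictMonoOn f D :=
  strictMonoOn_of_hasDerivWithinAt_pos hD (fun x hx => (hf x hx).continuousAt.continuousWithinAt)
    (fun x hx => (hf x (interior_subset hx)).hasDerivWithinAt) hf'

theorem strictMono_of_hasDerivAt_pos_of_ne {f f' : ℝ → ℝ} (a : ℝ)
    (hf : ∀ x, HasDerivAt f (f' x) x) (hf' : ∀ x ≠ a, 0 < f' x) : StrictMono f :=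
  StrictMonoOn.Iic_union_Ici (a := a)
    (strictMonoOn_of_hasDerivAt_pos (convex_Iic a) (fun x _ => hf x) fun x hx =>
      hf' x (by rw [interior_Iic] at hx; exact hx.ne))
    (strictMonoOn_of_hasDerivAt_pos (convex_Ici a) (fun x _ => hf x) fun x hx =>
      hf' x (by rw [interior_Ici] at hx; exact hx.ne'))

theorem StrictMono.pos_iff_of_map_zero {f : ℝ → ℝ} (hf : StrictMono f) (h0 : f 0 = 0) {x : ℝ} :
    0 < f x ↔ 0 < x := by
  simpa only [h0] using hf.lt_iff_lt (a := 0)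

theorem StrictMono.neg_iff_of_map_zero {f : ℝ → ℝ} (hf : StrictMono f) (h0 : f 0 = 0) {x : ℝ} :
    f x < 0 ↔ x < 0 := by
  simpa only [h0] using hf.lt_iff_lt (b := 0)

namespace Real

theorem sub_one_mul_exp_add_one_pos {x : ℝ} (hx : x ≠ 0) : 0 < (x - 1) * exp x + 1 := by
  have key : (1 - x) * exp x < 1 :=
    calc (1 - x) * exp x < exp (-x) * exp x := by
          gcongr; linarith [add_one_lt_exp (neg_ne_zero.2 hx)]
      _ = 1 := by rw [← exp_add, neg_add_cancel, exp_zero]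
  linarith

theorem strictMono_sub_two_mul_exp_add_add_two :
    StrictMono fun x : ℝ => (x - 2) * exp x + x + 2 := by
  refine strictMono_of_hasDerivAt_pos_of_ne 0 (fun x => ?_) fun x hx =>
    sub_one_mul_exp_add_one_pos hx
  exact ((((hasDerivAt_id' x).sub_const 2).mul (hasDerivAt_exp x)).add
    (hasDerivAt_id' x)).add_const 2 |>.congr_deriv (by ring)

theorem strictMono_exp_sub_one_sub_sub_sq_div_two :
    StrictMono fun x : ℝ => exp x - 1 - x - x ^ 2 / 2 := by
  refine strictMono_of_hasDerivAt_pos_of_ne 0 (f' := fun x => exp x - 1 - x) (fun x => ?_)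
    fun x hx => by linarith [add_one_lt_exp hx]
  exact (((hasDerivAt_exp x).sub_const 1).sub (hasDerivAt_id' x)).sub
    ((hasDerivAt_pow 2 x).div_const 2) |>.congr_deriv (by ring)

theorem hasDerivAt_exp_sub_sub_one_div_sq {x : ℝ} (hx : x ≠ 0) :
    HasDerivAt (fun x => (exp x - x - 1) / x ^ 2) (((x - 2) * exp x + x + 2) / x ^ 3) x := by
  refine (((hasDerivAt_exp x).sub (hasDerivAt_id' x)).sub_const 1).div (hasDerivAt_pow 2 x)
    (pow_ne_zero 2 hx) |>.congr_deriv ?_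
  simp only [Pi.sub_apply]
  field_simp
  ring

theorem strictMonoOn_exp_sub_sub_one_div_sq_Ioi :
    StrictMonoOn (fun x => (exp x - x - 1) / x ^ 2) (Ioi 0) := by
  refine strictMonoOn_of_hasDerivAt_pos (convex_Ioi 0)
    (fun x hx => hasDerivAt_exp_sub_sub_one_div_sq (ne_of_gt hx)) fun x hx => ?_
  rw [interior_Ioi] at hx
  exact div_pos (strictMono_sub_two_mul_exp_add_add_two.pos_iff_of_map_zero (by simp) |>.2 hx)
    (pow_pos hx 3)

theorem strictMonoOn_exp_sub_sub_one_div_sq_Iio :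
    StrictMonoOn (fun x => (exp x - x - 1) / x ^ 2) (Iio 0) := by
  refine strictMonoOn_of_hasDerivAt_pos (convex_Iio 0)
    (fun x hx => hasDerivAt_exp_sub_sub_one_div_sq (ne_of_lt hx)) fun x hx => ?_
  rw [interior_Iio] at hx
  exact div_pos_of_neg_of_neg
    (strictMono_sub_two_mul_exp_add_add_two.neg_iff_of_map_zero (by simp) |>.2 hx)
    (Odd.pow_neg (by decide) hx)

theorem half_lt_exp_sub_sub_one_div_sq {x : ℝ} (hx : 0 < x) : 1 / 2 < (exp x - x - 1) / x ^ 2 := by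
  have := strictMono_exp_sub_one_sub_sub_sq_div_two.pos_iff_of_map_zero (by simp) |>.2 hx
  rw [lt_div_iff₀ (by positivity)]
  linarith

theorem exp_sub_sub_one_div_sq_lt_half {x : ℝ} (hx : x < 0) : (exp x - x - 1) / x ^ 2 < 1 / 2 := by
  have := strictMono_exp_sub_one_sub_sub_sq_div_two.neg_iff_of_map_zero (by simp) |>.2 hx
  rw [div_lt_iff₀ (pow_two_pos_of_ne_zero hx.ne)]
  linarith

theorem strictMonoOn_exp_sub_sub_one_div_sq :
    StrictMonoOn (fun x => (exp x - x - 1) / x ^ 2) {0}ᶜ := by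
  intro a ha b hb hab
  rcases lt_or_gt_of_ne hb with hb | hb
  · exact strictMonoOn_exp_sub_sub_one_div_sq_Iio (hab.trans hb) hb hab
  rcases lt_or_gt_of_ne ha with ha | ha
  · exact (exp_sub_sub_one_div_sq_lt_half ha).trans (half_lt_exp_sub_sub_one_div_sq hb)
  · exact strictMonoOn_exp_sub_sub_one_div_sq_Ioi ha hb hab

end Real

/-- The function `x ↦ φ(x)/x²` with `φ(x) = eˣ − x − 1`, extended by `1/2` at `0`,
is nonnegative and strictly increasing on `ℝ`. -/
theorem stmt9 :
    (∀ x : ℝ, 0 ≤ (if x = 0 then (1 : ℝ) / 2 else (Real.exp x - x - 1) / x ^ 2)) ∧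
    StrictMono (fun x : ℝ =>
      if x = 0 then (1 : ℝ) / 2 else (Real.exp x - x - 1) / x ^ 2) := by
  refine ⟨fun x => ?_, fun a b hab => ?_⟩
  · split_ifs
    · norm_num
    · exact div_nonneg (by linarith [add_one_le_exp x]) (sq_nonneg x)
  · dsimp only
    split_ifs with ha hb hb
    · exact absurd (ha ▸ hb ▸ hab) (lt_irrefl 0)
    · exact half_lt_exp_sub_sub_one_div_sq (ha ▸ hab)
    · exact exp_sub_sub_one_div_sq_lt_half (hb ▸ hab)
    · exact strictMonoOn_exp_sub_sub_one_div_sq ha hb hab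
end

section
/- Let K : ℝᵖ → ℝ≥0 and l : ℝᵖ → ℝ be functions, λ₁,...,λ_K > 0 weights, G₁ ∪ ... ∪ G_K a partition of {1,...,p}, and β̂ a minimizer over ℝᵖ of β ↦ −l(β) + Σₖ λₖ‖β_{Gₖ}‖₂. Suppose there is a vector η ∈ ℝᵖ such that for all β, K(β̂) = K(β) + l(β) − l(β̂) + (β̂ − β)^T η, and suppose ‖η_{Gₖ}‖₂ ≤ λₖ for all k. Then K(β̂) ≤ inf_β { K(β) + 2 Σₖ λₖ‖β_{Gₖ}‖₂ }. -/
/-!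
Minimality of `betahat` bounds `l β - l betahat` by the difference of the penalties at `β` and
`betahat`. Blockwise Cauchy–Schwarz together with `‖η_{G k}‖₂ ≤ lam k` bounds the linear term
`(betahat - β)ᵀ η` by the sum of the same two penalties, so the penalty at `betahat` cancels and
that at `β` is counted twice.
-/

open Finset Function

lemma sum_sub_mul_le_sqrt_add_sqrt_mul_sqrt {ι : Type*} (s : Finset ι) (a b c : ι → ℝ) :
    ∑ j ∈ s, (a j - b j) * c j ≤
      (√(∑ j ∈ s, a j ^ 2) + √(∑ j ∈ s, b j ^ 2)) * √(∑ j ∈ s, c j ^ 2) := by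
  have hsplit : ∑ j ∈ s, (a j - b j) * c j = ∑ j ∈ s, a j * c j + ∑ j ∈ s, (-b j) * c j := by
    rw [← sum_add_distrib]
    exact sum_congr rfl fun j _ => by ring
  have hb := Real.sum_mul_le_sqrt_mul_sqrt s (fun j => -b j) c
  simp only [neg_sq] at hb
  rw [hsplit, add_mul]
  exact add_le_add (Real.sum_mul_le_sqrt_mul_sqrt s a c) hb

lemma sum_sub_mul_le_weighted_blockNorms {ι κ : Type*} [Fintype ι] [Fintype κ] [DecidableEq ι]
    (G : κ → Finset ι) (hdisj : Pairwise (Disjoint on G)) (hcover : univ.biUnion G = univ)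
    (lam : κ → ℝ) (a b c : ι → ℝ) (hc : ∀ k, √(∑ j ∈ G k, c j ^ 2) ≤ lam k) :
    ∑ j, (a j - b j) * c j ≤
      ∑ k, lam k * √(∑ j ∈ G k, a j ^ 2) + ∑ k, lam k * √(∑ j ∈ G k, b j ^ 2) := by
  rw [← sum_add_distrib, ← hcover, sum_biUnion fun k _ k' _ hkk' => hdisj hkk']
  refine sum_le_sum fun k _ => ?_
  calc ∑ j ∈ G k, (a j - b j) * c j
      ≤ (√(∑ j ∈ G k, a j ^ 2) + √(∑ j ∈ G k, b j ^ 2)) * √(∑ j ∈ G k, c j ^ 2) :=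
        sum_sub_mul_le_sqrt_add_sqrt_mul_sqrt _ a b c
    _ ≤ (√(∑ j ∈ G k, a j ^ 2) + √(∑ j ∈ G k, b j ^ 2)) * lam k :=
        mul_le_mul_of_nonneg_left (hc k) (by positivity)
    _ = _ := by ring

theorem stmt15_general (p K : ℕ) (Kf l : (Fin p → ℝ) → ℝ) (lam : Fin K → ℝ)
    (G : Fin K → Finset (Fin p))
    (hdisj : ∀ k k', k ≠ k' → Disjoint (G k) (G k'))
    (hcover : Finset.univ.biUnion G = Finset.univ)
    (betahat : Fin p → ℝ) (η : Fin p → ℝ)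
    (hmin : ∀ β : Fin p → ℝ,
      -l betahat + ∑ k, lam k * Real.sqrt (∑ j ∈ G k, (betahat j) ^ 2)
        ≤ -l β + ∑ k, lam k * Real.sqrt (∑ j ∈ G k, (β j) ^ 2))
    (hident : ∀ β : Fin p → ℝ,
      Kf betahat = Kf β + l β - l betahat + ∑ j, (betahat j - β j) * η j)
    (hη : ∀ k, Real.sqrt (∑ j ∈ G k, (η j) ^ 2) ≤ lam k) :
    ∀ β : Fin p → ℝ,
      Kf betahat ≤ Kf β + 2 * ∑ k, lam k * Real.sqrt (∑ j ∈ G k, (β j) ^ 2) := by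
  intro β
  have hlinear := sum_sub_mul_le_weighted_blockNorms G hdisj hcover lam betahat β η hη
  linarith [hmin β, hident β]

/-- Abstract slow oracle inequality for the group-Lasso. -/
theorem stmt15 (p K : ℕ) (Kf l : (Fin p → ℝ) → ℝ) (lam : Fin K → ℝ)
    (G : Fin K → Finset (Fin p))
    (hlam : ∀ k, 0 < lam k)
    (hdisj : ∀ k k', k ≠ k' → Disjoint (G k) (G k'))
    (hcover : Finset.univ.biUnion G = Finset.univ)
    (hKnonneg : ∀ β, 0 ≤ Kf β)
    (betahat : Fin p → ℝ) (η : Fin p → ℝ)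
    (hmin : ∀ β : Fin p → ℝ,
      -l betahat + ∑ k, lam k * Real.sqrt (∑ j ∈ G k, (betahat j) ^ 2)
        ≤ -l β + ∑ k, lam k * Real.sqrt (∑ j ∈ G k, (β j) ^ 2))
    (hident : ∀ β : Fin p → ℝ,
      Kf betahat = Kf β + l β - l betahat + ∑ j, (betahat j - β j) * η j)
    (hη : ∀ k, Real.sqrt (∑ j ∈ G k, (η j) ^ 2) ≤ lam k) :
    ∀ β : Fin p → ℝ,
      Kf betahat ≤ Kf β + 2 * ∑ k, lam k * Real.sqrt (∑ j ∈ G k, (β j) ^ 2) :=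
  stmt15_general p K Kf l lam G hdisj hcover betahat η hmin hident hη
end
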